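/- Let M ≥ 2 and K ≥ 2 be integers with (M−1)(K−1) > 1. Then ∫₀^∞ x⁻¹ f_{M,2,K}(x) dx + ( (M−1)(K−1) / ((M−1)(K−1) − 1) ) · ∫₀^∞ x⁻¹ f_{M,1,K}(x) dx = K α_{M,K−1} − (K−1) ( 1 − (M−1)/((M−1)(K−1) − 1) ) α_{M,K}. -/

import Mathlib

open MeasureTheory ProbabilityTheory Filter

/-- Regularized lower incomplete gamma function `G(M,x) = (1/Γ(M)) ∫₀ˣ e^{-t} t^{M-1} dt`. -/
noncomputable def regGamma (M : ℕ) (x : ℝ) : ℝ :=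
  (1 / Real.Gamma M) * ∫ t in (0:ℝ)..x, Real.exp (-t) * t ^ (M - 1)

/-- Gamma(M,1) density `g(M,x) = e^{-x} x^{M-1} / Γ(M)`. -/
noncomputable def gammaDens (M : ℕ) (x : ℝ) : ℝ :=
  Real.exp (-x) * x ^ (M - 1) / Real.Gamma M

/-- The constant `α_{M,K} = ∫₀^∞ K (e^{-x} x^{M-2} / Γ(M)) G(M,x)^{K-1} dx`. -/
noncomputable def alphaMK (M K : ℕ) : ℝ :=
  ∫ x in Set.Ioi (0:ℝ), K * (Real.exp (-x) * x ^ (M - 2) / Real.Gamma M) * regGamma M x ^ (K - 1)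

/-- Density `f_{M,r,K}` of the `r`-th largest among `K` i.i.d. Gamma(M,1) random variables. -/
noncomputable def fOrd (M r K : ℕ) (x : ℝ) : ℝ :=
  (K.factorial : ℝ) / ((K - r).factorial * (r - 1).factorial) *
    regGamma M x ^ (K - r) * (1 - regGamma M x) ^ (r - 1) * gammaDens M x

/-!
Dividing the Gamma density by `x` lowers its power: `x⁻¹ g(M,x) = e^{-x} x^{M-2} / Γ(M)`. So
`x⁻¹ f_{M,1,K} = K x⁻¹ g G^{K-1}` is the integrand of `α_{M,K}`, and expanding
`f_{M,2,K} = K(K-1) G^{K-2} (1 - G) g` writes `x⁻¹ f_{M,2,K}` as `K` times the integrand of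
`α_{M,K-1}` minus `K - 1` times that of `α_{M,K}`. What remains is the identity
`a/(a-1) = (K-1)(M-1)/(a-1)` for `a = (M-1)(K-1)`.
-/

open Real Set

noncomputable def alphaIntegrand (M K : ℕ) (x : ℝ) : ℝ :=
  K * (exp (-x) * x ^ (M - 2) / Gamma M) * regGamma M x ^ (K - 1)

lemma alphaMK_eq_integral (M K : ℕ) : alphaMK M K = ∫ x in Ioi 0, alphaIntegrand M K x := rfl

lemma integrableOn_exp_neg_mul_pow_Ioi (m : ℕ) :
    IntegrableOn (fun t : ℝ => exp (-t) * t ^ m) (Ioi 0) := by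
  refine (GammaIntegral_convergent (s := m + 1) (by positivity)).congr_fun
    (fun t _ => ?_) measurableSet_Ioi
  simp [← rpow_natCast]

lemma integral_exp_neg_mul_pow_Ioi {M : ℕ} (hM : 1 ≤ M) :
    ∫ t in Ioi 0, exp (-t) * t ^ (M - 1) = Gamma M := by
  rw [Gamma_eq_integral (by exact_mod_cast hM)]
  refine setIntegral_congr_fun measurableSet_Ioi fun t _ => ?_
  rw [← rpow_natCast, Nat.cast_sub hM, Nat.cast_one]

lemma continuous_regGamma (M : ℕ) : Continuous (regGamma M) :=
  continuous_const.mul <| intervalIntegral.continuous_primitive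
    (fun _ _ => (by fun_prop : Continuous fun t : ℝ => exp (-t) * t ^ (M - 1)).intervalIntegrable _ _) 0

lemma regGamma_nonneg (M : ℕ) {x : ℝ} (hx : 0 ≤ x) : 0 ≤ regGamma M x := by
  have hΓ : 0 ≤ Gamma M := Gamma_nonneg_of_nonneg (Nat.cast_nonneg M)
  have hint : 0 ≤ ∫ t in (0:ℝ)..x, exp (-t) * t ^ (M - 1) :=
    intervalIntegral.integral_nonneg hx fun t ht => by have := ht.1; positivity
  unfold regGamma
  positivity

lemma regGamma_le_one {M : ℕ} (hM : 1 ≤ M) {x : ℝ} (hx : 0 ≤ x) : regGamma M x ≤ 1 := by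
  have hΓ : 0 < Gamma M := Gamma_pos_of_pos (by exact_mod_cast hM)
  have hpartial : ∫ t in (0:ℝ)..x, exp (-t) * t ^ (M - 1) ≤ Gamma M := by
    rw [intervalIntegral.integral_of_le hx, ← integral_exp_neg_mul_pow_Ioi hM]
    refine setIntegral_mono_set (integrableOn_exp_neg_mul_pow_Ioi (M - 1)) ?_
      (Eventually.of_forall fun t ht => ht.1)
    filter_upwards [ae_restrict_mem measurableSet_Ioi] with t ht
    have := le_of_lt (mem_Ioi.mp ht)
    positivity
  unfold regGamma
  rw [one_div, inv_mul_le_iff₀ hΓ, mul_one]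
  exact hpartial

lemma integrableOn_alphaIntegrand {M : ℕ} (hM : 1 ≤ M) (K : ℕ) :
    IntegrableOn (alphaIntegrand M K) (Ioi 0) := by
  have hdom : IntegrableOn (fun x : ℝ => K * (exp (-x) * x ^ (M - 2) / Gamma M)) (Ioi 0) :=
    ((integrableOn_exp_neg_mul_pow_Ioi (M - 2)).div_const _).const_mul _
  refine hdom.mul_bdd (c := 1)
    ((continuous_regGamma M).pow _).aestronglyMeasurable ?_
  filter_upwards [ae_restrict_mem measurableSet_Ioi] with x hx
  have hG := regGamma_nonneg M (le_of_lt hx)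
  rw [Real.norm_eq_abs, abs_of_nonneg (by positivity)]
  exact pow_le_one₀ hG (regGamma_le_one hM (le_of_lt hx))

lemma inv_mul_gammaDens {M : ℕ} (hM : 2 ≤ M) {x : ℝ} (hx : x ≠ 0) :
    x⁻¹ * gammaDens M x = exp (-x) * x ^ (M - 2) / Gamma M := by
  obtain ⟨m, rfl⟩ : ∃ m, M = m + 2 := ⟨M - 2, by omega⟩
  simp only [gammaDens, show m + 2 - 1 = m + 1 by omega, Nat.add_sub_cancel, pow_succ]
  field_simp

lemma inv_mul_fOrd_one {M K : ℕ} (hM : 2 ≤ M) (hK : 1 ≤ K) {x : ℝ} (hx : x ≠ 0) :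
    x⁻¹ * fOrd M 1 K x = alphaIntegrand M K x := by
  obtain ⟨k, rfl⟩ : ∃ k, K = k + 1 := ⟨K - 1, by omega⟩
  rw [alphaIntegrand, ← inv_mul_gammaDens hM hx]
  simp only [fOrd, Nat.add_sub_cancel, Nat.sub_self, Nat.factorial_succ, Nat.factorial_zero]
  push_cast
  field_simp

lemma inv_mul_fOrd_two {M K : ℕ} (hM : 2 ≤ M) (hK : 2 ≤ K) {x : ℝ} (hx : x ≠ 0) :
    x⁻¹ * fOrd M 2 K x = K * alphaIntegrand M (K - 1) x - (K - 1) * alphaIntegrand M K x := by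
  obtain ⟨k, rfl⟩ : ∃ k, K = k + 2 := ⟨K - 2, by omega⟩
  rw [alphaIntegrand, alphaIntegrand, ← inv_mul_gammaDens hM hx]
  simp only [fOrd, Nat.add_sub_cancel, show k + 2 - 1 = k + 1 by omega,
    show k + 1 - 1 = k by omega, Nat.factorial_succ]
  push_cast
  field_simp
  ring

lemma integral_inv_mul_fOrd_one {M K : ℕ} (hM : 2 ≤ M) (hK : 1 ≤ K) :
    ∫ x in Ioi 0, x⁻¹ * fOrd M 1 K x = alphaMK M K :=
  setIntegral_congr_fun measurableSet_Ioi fun _ hx => inv_mul_fOrd_one hM hK (ne_of_gt hx)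

lemma integral_inv_mul_fOrd_two {M K : ℕ} (hM : 2 ≤ M) (hK : 2 ≤ K) :
    ∫ x in Ioi 0, x⁻¹ * fOrd M 2 K x = K * alphaMK M (K - 1) - (K - 1) * alphaMK M K := by
  have hM1 : 1 ≤ M := by omega
  rw [setIntegral_congr_fun measurableSet_Ioi fun _ hx => inv_mul_fOrd_two hM hK (ne_of_gt hx),
    integral_sub ((integrableOn_alphaIntegrand hM1 _).const_mul _)
      ((integrableOn_alphaIntegrand hM1 _).const_mul _),
    integral_const_mul, integral_const_mul, alphaMK_eq_integral, alphaMK_eq_integral]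

theorem avg_min_power_benchmark_two_users_general (M K : ℕ) (hM : 2 ≤ M) (hK : 2 ≤ K) :
    (∫ x in Set.Ioi (0:ℝ), x⁻¹ * fOrd M 2 K x) +
      (((M : ℝ) - 1) * ((K : ℝ) - 1) / (((M : ℝ) - 1) * ((K : ℝ) - 1) - 1)) *
        ∫ x in Set.Ioi (0:ℝ), x⁻¹ * fOrd M 1 K x
    = (K : ℝ) * alphaMK M (K - 1)
      - ((K : ℝ) - 1) *
          (1 - ((M : ℝ) - 1) / (((M : ℝ) - 1) * ((K : ℝ) - 1) - 1)) * alphaMK M K := by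
  rw [integral_inv_mul_fOrd_two hM hK, integral_inv_mul_fOrd_one hM (by omega)]
  ring

/-- **Theorem 6 (performance benchmark for 2 selected users).** Integral identity for the
lower bound `p_L(2)` on average transmit power, combining the two largest norms with the
largest possible angle (`M ≥ 2`, `K ≥ 2`, `(M-1)(K-1) > 1`). -/
theorem avg_min_power_benchmark_two_users (M K : ℕ) (hM : 2 ≤ M) (hK : 2 ≤ K)
    (hMK : 1 < (M - 1) * (K - 1)) :
    (∫ x in Set.Ioi (0:ℝ), x⁻¹ * fOrd M 2 K x) +
      (((M : ℝ) - 1) * ((K : ℝ) - 1) / (((M : ℝ) - 1) * ((K : ℝ) - 1) - 1)) *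
        ∫ x in Set.Ioi (0:ℝ), x⁻¹ * fOrd M 1 K x
    = (K : ℝ) * alphaMK M (K - 1)
      - ((K : ℝ) - 1) *
          (1 - ((M : ℝ) - 1) / (((M : ℝ) - 1) * ((K : ℝ) - 1) - 1)) * alphaMK M K :=
  avg_min_power_benchmark_two_users_general M K hM hK
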